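/- Let μ₁ be the measure on ℝ with density the indicator of [0,1], let μ₂ be the measure on ℝ with density 3·(indicator of (0,1/3)), and let μ₃ be the measure on ℝ with density 3·(indicator of (2/3,1)), each with respect to Lebesgue measure. Then there do not exist cutpoints a, b with 0 ≤ a ≤ b ≤ 1 such that μ₁([0,a]) = μ₃([a,b]) = μ₂([b,1]) and this common value is positive. -/

import Mathlib

open MeasureTheory Set

/-- Player 1 values the unit interval uniformly. -/
noncomputable def mu1 : Measure ℝ :=
  volume.withDensity ((Icc (0:ℝ) 1).indicator fun _ => (1 : ENNReal))

/-- Player 2's value is uniform on `(0, 1/3)`. -/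
noncomputable def mu2 : Measure ℝ :=
  volume.withDensity ((Ioo (0:ℝ) (1/3)).indicator fun _ => (3 : ENNReal))

/-- Player 3's value is uniform on `(2/3, 1)`. -/
noncomputable def mu3 : Measure ℝ :=
  volume.withDensity ((Ioo (2/3:ℝ) 1).indicator fun _ => (3 : ENNReal))

/-! Player 2's value lives left of `1/3` and player 3's right of `2/3`, so whichever side of
`1/3` the second cutpoint `b` falls on, one of the pieces `[a, b]`, `[b, 1]` is worthless to its
owner, forcing the common value to be `0`. -/

theorem withDensity_indicator_apply_eq_zero {α : Type*} [MeasurableSpace α]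
    {μ : Measure α} {s t : Set α} (hs : MeasurableSet s) (f : α → ENNReal) (hts : Disjoint t s) :
    μ.withDensity (s.indicator f) t = 0 := by
  rw [withDensity_indicator hs]
  refine withDensity_absolutelyContinuous _ _ ?_
  rw [Measure.restrict_apply' hs, hts.inter_eq, measure_empty]

lemma mu2_Icc_eq_zero {b : ℝ} (hb : 1/3 ≤ b) : mu2 (Icc b 1) = 0 :=
  withDensity_indicator_apply_eq_zero measurableSet_Ioo _
    (disjoint_left.2 fun _ hx hx' => (hb.trans hx.1).not_gt hx'.2)

lemma mu3_Icc_eq_zero {a b : ℝ} (hb : b ≤ 2/3) : mu3 (Icc a b) = 0 :=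
  withDensity_indicator_apply_eq_zero measurableSet_Ioo _
    (disjoint_left.2 fun _ hx hx' => (hx.2.trans hb).not_gt hx'.1)

/-- For the left-to-right ordering 1–3–2 there are no cutpoints `a ≤ b` equalizing the
three players' values at a positive common value. -/
theorem no_equalizing_cutpoints :
    ¬ ∃ a b : ℝ, 0 ≤ a ∧ a ≤ b ∧ b ≤ 1 ∧
      mu1 (Icc (0:ℝ) a) = mu3 (Icc a b) ∧
      mu3 (Icc a b) = mu2 (Icc b 1) ∧
      0 < mu1 (Icc (0:ℝ) a) := by
  rintro ⟨a, b, -, -, -, h13, h32, hpos⟩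
  rcases le_total (1/3) b with hb | hb
  · rw [h13, h32, mu2_Icc_eq_zero hb] at hpos
    exact hpos.ne' rfl
  · rw [h13, mu3_Icc_eq_zero (hb.trans (by norm_num))] at hpos
    exact hpos.ne' rfl
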